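/- Let G = [I_k | P] be a k × n binary matrix in systematic form and H = [Pᵀ | I_{n−k}]. The number of k-element subsets S of {1,…,n} for which the k × k submatrix of G on columns S is invertible equals the number of (n−k)-element subsets T of {1,…,n} for which the (n−k) × (n−k) submatrix of H on columns T is invertible. -/

import Mathlib

open scoped Classical

/-- The columns of `M` indexed by `S` are linearly independent over `F₂`. -/
def colsIndep {r : ℕ} {ι : Type} [Fintype ι]
    (M : Matrix (Fin r) ι (ZMod 2)) (S : Finset ι) : Prop :=
  LinearIndependent (ZMod 2) (fun j : {x // x ∈ S} => fun i => M i j.val)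

/-- The number of `c`-element sets of column indices of `M` giving linearly independent
columns (equivalently, invertible `c × c` submatrices). -/
noncomputable def numInvertibleSub {r : ℕ} {ι : Type} [Fintype ι]
    (M : Matrix (Fin r) ι (ZMod 2)) (c : ℕ) : ℕ :=
  ((Finset.univ.powersetCard c).filter (fun S => colsIndep M S)).card

/-!
Over `F₂`, `G = [I_k | P]` and `H = [Pᵀ | I_m]` satisfy `G Hᵀ = P + P = 0`, and both have
independent rows. If `G_S` is invertible and `v = y H` vanishes on `Sᶜ`, then `v` is orthogonal
to every `x G`; since the restrictions `(x G)|_S` exhaust `F₂^S`, also `v|_S = 0`, so `v = 0`,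
`y = 0`, and `H_{Sᶜ}` is invertible. The situation is symmetric (`H Gᵀ = 0`), so `S ↦ Sᶜ`
matches the two families of column sets.
-/

open Matrix Function

namespace Matrix

variable {K R : Type*} {m n ι : Type*}

theorem linearIndependent_col_iff_row_of_card_eq [Field K] [Fintype m] [Fintype n]
    (A : Matrix m n K) (h : Fintype.card m = Fintype.card n) :
    LinearIndependent K A.col ↔ LinearIndependent K A.row := by
  rw [linearIndependent_iff_card_eq_finrank_span, linearIndependent_iff_card_eq_finrank_span,
    Set.finrank, Set.finrank, ← rank_eq_finrank_span_cols, ← rank_eq_finrank_span_row, h]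

theorem vecMul_surjective_of_injective [Field K] [Fintype m] [Fintype n] {A : Matrix m n K}
    (h : Fintype.card m = Fintype.card n) (hA : Injective A.vecMul) : Surjective A.vecMul :=
  (LinearMap.injective_iff_surjective_of_finrank_eq_finrank (f := A.vecMulLinear)
    (by simp [h])).mp hA

theorem vecMul_dotProduct_vecMul [CommSemiring R] [Fintype m] [Fintype n] [Fintype ι]
    (G : Matrix m ι R) (H : Matrix n ι R) (x : m → R) (y : n → R) :
    (x ᵥ* G) ⬝ᵥ (y ᵥ* H) = (x ᵥ* (G * Hᵀ)) ⬝ᵥ y := by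
  rw [← mulVec_transpose H, dotProduct_mulVec, vecMul_vecMul]

theorem vecMul_fromCols_one_left_injective [Semiring R] [Fintype m] [DecidableEq m]
    (B : Matrix m n R) : Injective (fromCols (1 : Matrix m m R) B).vecMul := fun x y h => by
  simpa [vecMul_fromCols] using congr_arg (· ∘ Sum.inl) h

theorem vecMul_fromCols_one_right_injective [Semiring R] [Fintype m] [DecidableEq m]
    (A : Matrix m n R) : Injective (fromCols A (1 : Matrix m m R)).vecMul := fun x y h => by
  simpa [vecMul_fromCols] using congr_arg (· ∘ Sum.inr) h

end Matrix

theorem dotProduct_eq_of_eq_zero_off {R ι : Type*} [NonUnitalNonAssocSemiring R] [Fintype ι]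
    (u v : ι → R) (S : Finset ι) (hv : ∀ j ∉ S, v j = 0) :
    u ⬝ᵥ v = (fun j : S => u j) ⬝ᵥ (fun j : S => v j) := by
  rw [dotProduct, dotProduct, Finset.sum_coe_sort S (fun j => u j * v j)]
  exact (Finset.sum_subset S.subset_univ fun j _ hj => by simp [hv j hj]).symm

theorem colsIndep_iff_vecMul_injective {r : ℕ} {ι : Type} [Fintype ι]
    (M : Matrix (Fin r) ι (ZMod 2)) {S : Finset ι} (hS : S.card = r) :
    colsIndep M S ↔ Injective (M.submatrix id ((↑) : S → ι)).vecMul := by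
  rw [vecMul_injective_iff, ← linearIndependent_col_iff_row_of_card_eq _ (by simp [hS])]
  rfl

theorem colsIndep_compl {k m : ℕ} {ι : Type} [Fintype ι]
    (G : Matrix (Fin k) ι (ZMod 2)) (H : Matrix (Fin m) ι (ZMod 2)) (hGH : G * Hᵀ = 0)
    (hH : Injective H.vecMul) {S : Finset ι} (hS : S.card = k) (hSc : Sᶜ.card = m)
    (hG : colsIndep G S) : colsIndep H Sᶜ := by
  rw [colsIndep_iff_vecMul_injective G hS] at hG
  rw [colsIndep_iff_vecMul_injective H hSc, ← coe_vecMulLinear, injective_iff_map_eq_zero]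
  intro y hy
  set v := y ᵥ* H
  have hv_off : ∀ j ∉ S, v j = 0 := fun j hj => congr_fun hy ⟨j, Finset.mem_compl.2 hj⟩
  have hGS := vecMul_surjective_of_injective (by simp [hS]) hG
  have hv_on : (fun j : S => v j) = 0 := by
    refine dotProduct_eq_zero_iff.1 fun w => ?_
    obtain ⟨x, rfl⟩ := hGS w
    rw [dotProduct_comm]
    calc (x ᵥ* G.submatrix id (↑)) ⬝ᵥ (fun j : S => v j) = (x ᵥ* G) ⬝ᵥ v :=
          (dotProduct_eq_of_eq_zero_off (x ᵥ* G) v S hv_off).symm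
      _ = 0 := by rw [vecMul_dotProduct_vecMul, hGH, vecMul_zero, zero_dotProduct]
  have hv : v = 0 ᵥ* H := by
    ext j
    by_cases hj : j ∈ S
    · simpa using congr_fun hv_on ⟨j, hj⟩
    · simpa using hv_off j hj
  exact hH hv

theorem numInvertibleSub_eq_of_mul_transpose_eq_zero {k m : ℕ} {ι : Type} [Fintype ι]
    (hι : Fintype.card ι = k + m)
    (G : Matrix (Fin k) ι (ZMod 2)) (H : Matrix (Fin m) ι (ZMod 2)) (hGH : G * Hᵀ = 0)
    (hG : Injective G.vecMul) (hH : Injective H.vecMul) :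
    numInvertibleSub G k = numInvertibleSub H m := by
  have hHG : H * Gᵀ = 0 := by
    rw [← transpose_transpose H, ← transpose_mul, hGH, transpose_zero]
  unfold numInvertibleSub
  refine Finset.card_bij' (fun S _ => Sᶜ) (fun T _ => Tᶜ) ?_ ?_
    (fun S _ => compl_compl S) (fun T _ => compl_compl T)
  all_goals
    intro S hS
    simp only [Finset.mem_filter, Finset.mem_powersetCard_univ] at hS ⊢
    have hSc := Finset.card_compl S
  · exact ⟨by omega, colsIndep_compl G H hGH hH hS.1 (by omega) hS.2⟩
  · exact ⟨by omega, colsIndep_compl H G hHG hG hS.1 (by omega) hS.2⟩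

/-- For `G = [I_k | P]` and `H = [Pᵀ | I_m]` (columns indexed by
`Fin k ⊕ Fin m`, `n = k + m`), the number of `k`-element column subsets of `G` giving
invertible `k × k` submatrices equals the number of `m = n − k`-element column subsets
of `H` giving invertible `m × m` submatrices. -/
theorem stmt_5 {k m : ℕ} (P : Matrix (Fin k) (Fin m) (ZMod 2)) :
    numInvertibleSub (Matrix.fromCols 1 P : Matrix (Fin k) (Fin k ⊕ Fin m) (ZMod 2)) k =
      numInvertibleSub
        (Matrix.fromCols P.transpose 1 : Matrix (Fin m) (Fin k ⊕ Fin m) (ZMod 2)) m := by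
  refine numInvertibleSub_eq_of_mul_transpose_eq_zero (by simp) _ _ ?_
    (vecMul_fromCols_one_left_injective P) (vecMul_fromCols_one_right_injective Pᵀ)
  rw [transpose_fromCols, fromCols_mul_fromRows, transpose_transpose, transpose_one,
    Matrix.one_mul, Matrix.mul_one]
  ext i j
  exact CharTwo.add_self_eq_zero (P i j)
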